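/- Let r ≥ 1 be an integer and let T be a binary tree of depth r (a rooted tree of height r in which every vertex has at most two children). Then b(T) = r + 1 if and only if T contains T_r as a subtree, where T_1 is the tree on 2 vertices and, for r ≥ 2, T_r is the tree obtained from the perfect binary tree of depth r−1 by attaching one new leaf to each of its 2^{r−1} leaves. -/

import Mathlib

/-
If `T_r` embeds in `T`, then `r` balls of radii `r - 1, …, 1, 0` cannot cover `T`. Each ball of
radius `j` meets the image of `T_r` in the image of a ball of `T_r` of radius at most `j`, centred
at the point of the image nearest to its centre; such a ball contains at most `2 ^ j` of the
`2 ^ r` vertices of `T_r` of depth at least `r - 1`, and `∑ i < r, 2 ^ i < 2 ^ r`.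
Conversely, if no copy of `T_r` hangs below the root, the tree below any vertex `u` of height at
most `k` is covered by induction on `k`: a ball of radius `k - 1` at a child `a` of `u` covers `u`
and everything below `a`, and `a` can be chosen so that below the other child, if any, no copy of
`T_(k-1)` hangs. Since one ball of radius `r` at the root covers `T`, `b(T) = r + 1` exactly when
`r` balls do not suffice.
-/

/-- `ball G u k` is `N^k[u]`: the set of vertices `v` reachable from `u`
with `dist_G(u,v) ≤ k`. -/
def ball {V : Type*} (G : SimpleGraph V) (u : V) (k : ℕ) : Set V :=
  {v | G.Reachable u v ∧ G.dist u v ≤ k}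

/-- The burning number of `G`: the minimum length `k` of a sequence
`(x_1, …, x_k)` of vertices with `V(G) = N^{k-1}[x_1] ∪ ⋯ ∪ N^0[x_k]`. -/
noncomputable def burningNumber {V : Type*} (G : SimpleGraph V) : ℕ :=
  sInf {k | ∃ x : Fin k → V, ∀ v : V, ∃ i : Fin k, v ∈ ball G (x i) (k - 1 - (i : ℕ))}

/-- The vertex type of the tree `T_r`: binary strings of length at most `r`
(a string is the sequence of child-choices from the root, most recent first),
where strings of length exactly `r` correspond to the unique new leaf attached to
each leaf of the perfect binary tree of depth `r - 1`, encoded by the choice `false`. -/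
abbrev TrVert (r : ℕ) : Type :=
  {l : List Bool // l.length ≤ r ∧ (l.length = r → l.head? = some false)}

/-- The tree `T_r`: for `r = 1` it is the tree of order `2`, and for `r ≥ 2` it arises
from the perfect binary tree of depth `r - 1` by attaching a new leaf to each of its
`2 ^ (r - 1)` leaves. Two vertices are adjacent iff one is a child of the other. -/
def Tr (r : ℕ) : SimpleGraph (TrVert r) where
  Adj a b := (∃ c : Bool, (b : List Bool) = c :: (a : List Bool)) ∨
             (∃ c : Bool, (a : List Bool) = c :: (b : List Bool))
  symm := ⟨fun a b h => h.symm⟩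
  loopless := ⟨by
    intro a h
    have : (a : List Bool).length = (a : List Bool).length + 1 := by
      rcases h with ⟨c, h⟩ | ⟨c, h⟩ <;> simpa using congrArg List.length h
    omega⟩

open SimpleGraph Finset

abbrev IsTrVert (r : ℕ) (l : List Bool) : Prop :=
  l.length ≤ r ∧ (l.length = r → l.head? = some false)

theorem IsTrVert.of_suffix {r : ℕ} {s l : List Bool} (h : IsTrVert r l) (hs : s <:+ l) :
    IsTrVert r s := by
  have := hs.length_le
  refine ⟨this.trans h.1, fun hlen => ?_⟩
  rw [hs.eq_of_length (by omega)]
  exact h.2 (by omega)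

namespace SimpleGraph

variable {V : Type*} {G : SimpleGraph V}

theorem Walk.IsPath.append_of_support_inter {u v w : V} {p : G.Walk u v} {q : G.Walk v w}
    (hp : p.IsPath) (hq : q.IsPath) (h : ∀ y ∈ p.support, y ∈ q.support → y = v) :
    (p.append q).IsPath := by
  have hq' := hq.support_nodup
  rw [← q.cons_tail_support, List.nodup_cons] at hq'
  rw [Walk.isPath_def, Walk.support_append]
  refine hp.support_nodup.append hq'.2 fun y hyp hyq => ?_
  obtain rfl := h y hyp (List.mem_of_mem_tail hyq)
  exact hq'.1 hyq

theorem dist_le_of_mem_support {u v y : V} {p : G.Walk u v} (hp : p.length = G.dist u v)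
    (hy : y ∈ p.support) : G.dist u y ≤ G.dist u v := by
  classical
  exact (dist_le (p.takeUntil y hy)).trans ((p.length_takeUntil_le_length hy).trans hp.le)

theorem IsTree.length_eq_dist_of_isPath (hG : G.IsTree) {u v : V} {p : G.Walk u v}
    (hp : p.IsPath) : p.length = G.dist u v := by
  obtain ⟨q, hq, hlen⟩ := hG.connected.exists_path_of_dist u v
  rw [(hG.existsUnique_path u v).unique hp hq, hlen]

theorem IsTree.dist_eq_add_length_of_isPath (hG : G.IsTree) {S : Set V} {z g u : V}
    (hg : ∀ s ∈ S, G.dist z g ≤ G.dist z s) {q : G.Walk g u} (hq : q.IsPath)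
    (hqS : ∀ y ∈ q.support, y ∈ S) : G.dist z u = G.dist z g + q.length := by
  classical
  obtain ⟨p, hp, hplen⟩ := hG.connected.exists_path_of_dist z g
  have hpq : (p.append q).IsPath := hp.append_of_support_inter hq fun y hyp hyq => by
    have hsplit := congrArg Walk.length (p.take_spec hyp)
    rw [Walk.length_append] at hsplit
    have h1 : G.dist z y ≤ (p.takeUntil y hyp).length := dist_le _
    have h2 : G.dist y g ≤ (p.dropUntil y hyp).length := dist_le _
    have h3 := hg y (hqS y hyq)
    exact hG.connected.dist_eq_zero_iff.mp (by omega)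
  rw [← hG.length_eq_dist_of_isPath hpq, Walk.length_append, hplen]

theorem IsTree.exists_gate {W : Type*} [Nonempty W] {H : SimpleGraph W} (hG : G.IsTree)
    (f : H →g G) (hf : Function.Injective f) (z : V) :
    ∃ g, ∀ u (q : H.Walk g u), q.IsPath → G.dist z (f u) = G.dist z (f g) + q.length := by
  refine ⟨Function.argmin fun w => G.dist z (f w), fun u q hq => ?_⟩
  rw [← q.length_map f]
  refine hG.dist_eq_add_length_of_isPath (S := Set.range f) ?_ (hq.map hf) fun y hy => ?_
  · rintro _ ⟨w, rfl⟩
    exact Function.argmin_le (fun w => G.dist z (f w)) w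
  · rw [Walk.support_map, List.mem_map] at hy
    obtain ⟨w, -, rfl⟩ := hy
    exact ⟨w, rfl⟩

def Burnable (G : SimpleGraph V) (S : Set V) (k : ℕ) : Prop :=
  ∃ x : Fin k → V, ∀ v ∈ S, ∃ i : Fin k, G.dist (x i) v ≤ k - 1 - i

theorem burningNumber_eq_sInf_burnable (hG : G.Connected) :
    burningNumber G = sInf {k | G.Burnable Set.univ k} := by
  simp only [burningNumber, _root_.ball, Burnable, hG.preconnected _ _, Set.mem_ofPred_eq,
    true_and, Set.mem_univ, forall_const]

theorem Burnable.subset {S S' : Set V} {k : ℕ} (h : G.Burnable S k) (hS : S' ⊆ S) :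
    G.Burnable S' k :=
  let ⟨x, hx⟩ := h
  ⟨x, fun v hv => hx v (hS hv)⟩

theorem Burnable.cons {S S' : Set V} {k : ℕ} (h : G.Burnable S k) (a : V)
    (ha : ∀ v ∈ S', G.dist a v ≤ k) : G.Burnable (S' ∪ S) (k + 1) := by
  obtain ⟨x, hx⟩ := h
  refine ⟨Fin.cons a x, fun v hv => ?_⟩
  rcases hv with hv | hv
  · exact ⟨0, by simpa using ha v hv⟩
  · obtain ⟨i, hi⟩ := hx v hv
    exact ⟨i.succ, by simp only [Fin.cons_succ, Fin.val_succ]; omega⟩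

theorem Burnable.mono {S : Set V} {k m : ℕ} (h : G.Burnable S k) (hkm : k ≤ m) (a : V) :
    G.Burnable S m := by
  induction m, hkm using Nat.le_induction with
  | base => exact h
  | succ m _ ih => simpa using ih.cons (S' := ∅) a (by simp)

variable {root : V}

def IsChild (G : SimpleGraph V) (root u c : V) : Prop :=
  G.Adj u c ∧ G.dist root c = G.dist root u + 1

def descendants (G : SimpleGraph V) (root u : V) : Set V :=
  {v | G.dist root v = G.dist root u + G.dist u v}

@[simp]
theorem descendants_root : G.descendants root root = Set.univ := by
  simp [descendants]

theorem Connected.exists_isChild_of_mem_descendants (hG : G.Connected) {u v : V}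
    (hv : v ∈ G.descendants root u) (hne : v ≠ u) :
    ∃ c, G.IsChild root u c ∧ v ∈ G.descendants root c := by
  obtain ⟨p, -, hplen⟩ := hG.exists_path_of_dist u v
  cases p with
  | nil => exact absurd rfl hne
  | @cons _ c _ hadj q =>
    have h1 := hG.dist_triangle (u := root) (v := u) (w := c)
    have h2 := hG.dist_triangle (u := root) (v := c) (w := v)
    have h3 : G.dist u c = 1 := dist_eq_one_iff_adj.2 hadj
    have h4 : G.dist c v ≤ q.length := dist_le q
    simp only [descendants, Set.mem_ofPred_eq, Walk.length_cons] at hv hplen ⊢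
    exact ⟨c, ⟨hadj, by omega⟩, by omega⟩

theorem IsTree.eq_of_isChild (hG : G.IsTree) {u u' c : V} (h : G.IsChild root u c)
    (h' : G.IsChild root u' c) : u = u' := by
  obtain ⟨q, hq, -⟩ := hG.connected.exists_path_of_dist root c
  have key : ∀ w, G.IsChild root w c → w = q.penultimate := fun w hw => by
    obtain ⟨p, hp, hplen⟩ := hG.connected.exists_path_of_dist root w
    have hc : c ∉ p.support := fun hc => by
      have := dist_le_of_mem_support hplen hc
      have := hw.2
      omega
    exact hG.isAcyclic.eq_penultimate_of_adj_end hq hw.1.symm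
      (hG.isAcyclic.mem_support_of_ne_mem_support_of_adj_of_isPath hq hp hw.1.symm hc)
  exact (key u h).trans (key u' h').symm

/-- A copy of `T_k` hangs below `u`. The two children chosen at a vertex may coincide only in
`RootsTr 1`, which encodes the single pendant leaf below each leaf of the perfect tree. -/
def RootsTr (G : SimpleGraph V) (root : V) : ℕ → V → Prop
  | 0, _ => True
  | k + 1, u => ∃ c₁ c₂, G.IsChild root u c₁ ∧ G.IsChild root u c₂ ∧ (k ≠ 0 → c₁ ≠ c₂) ∧
      G.RootsTr root k c₁ ∧ G.RootsTr root k c₂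

theorem Connected.burnable_descendants_of_isChild (hG : G.Connected) {u a : V} {m : ℕ}
    {R : Set V} (hdepth : ∀ v, G.dist root v ≤ G.dist root u + (m + 2))
    (ha : G.IsChild root u a) (hR : G.Burnable R (m + 1))
    (hchild : ∀ c, G.IsChild root u c → c = a ∨ G.descendants root c ⊆ R) :
    G.Burnable (G.descendants root u) (m + 2) := by
  refine (hR.cons a (S' := {v | v = u ∨ v ∈ G.descendants root a}) ?_).subset fun v hv => ?_
  · rintro v (rfl | hv)
    · rw [dist_comm, dist_eq_one_iff_adj.2 ha.1]
      omega
    · have := hdepth v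
      have := ha.2
      simp only [descendants, Set.mem_ofPred_eq] at hv
      omega
  · by_cases hvu : v = u
    · exact Or.inl (Or.inl hvu)
    obtain ⟨c, hc, hvc⟩ := hG.exists_isChild_of_mem_descendants hv hvu
    rcases hchild c hc with rfl | hcR
    · exact Or.inl (Or.inr hvc)
    · exact Or.inr (hcR hvc)

theorem Connected.burnable_descendants_of_not_rootsTr [Finite V] (hG : G.Connected)
    (hbin : ∀ v, {c | G.IsChild root v c}.ncard ≤ 2) :
    ∀ (k : ℕ) (u : V), (∀ v, G.dist root v ≤ G.dist root u + k) → ¬ G.RootsTr root k u →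
      G.Burnable (G.descendants root u) k := by
  intro k
  induction k with
  | zero => exact fun _ _ hnot => absurd trivial hnot
  | succ k ih =>
    intro u hdepth hnot
    by_cases hleaf : ∀ c, ¬ G.IsChild root u c
    · refine ⟨fun _ => u, fun v hv => ⟨0, ?_⟩⟩
      by_cases hvu : v = u
      · simp [hvu]
      · obtain ⟨c, hc, -⟩ := hG.exists_isChild_of_mem_descendants hv hvu
        exact absurd hc (hleaf c)
    push Not at hleaf
    obtain ⟨a, ha⟩ := hleaf
    obtain _ | m := k
    · exact absurd ⟨a, a, ha, ha, fun h => absurd rfl h, trivial, trivial⟩ hnot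
    by_cases htwo : ∃ b, G.IsChild root u b ∧ b ≠ a
    · obtain ⟨b, hb, hba⟩ := htwo
      wlog hnb : ¬ G.RootsTr root (m + 1) b generalizing a b
      · exact this b hb a ha hba.symm fun hna =>
          hnot ⟨a, b, ha, hb, fun _ => hba.symm, hna, not_not.1 hnb⟩
      have hC : {c | G.IsChild root u c} ⊆ {a, b} := by
        refine (Set.eq_of_subset_of_ncard_le ?_ ?_ (Set.toFinite _)).symm.subset
        · simp [Set.insert_subset_iff, ha, hb]
        · rw [Set.ncard_pair hba.symm]
          exact hbin u
      have hb_depth : ∀ v, G.dist root v ≤ G.dist root b + (m + 1) := fun v => by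
        have := hdepth v
        have := hb.2
        omega
      refine hG.burnable_descendants_of_isChild hdepth ha (ih b hb_depth hnb) fun c hc => ?_
      rcases hC hc with rfl | rfl
      exacts [Or.inl rfl, Or.inr subset_rfl]
    · push Not at htwo
      exact hG.burnable_descendants_of_isChild (R := ∅) hdepth ha ⟨fun _ => u, by simp⟩
        fun c hc => Or.inl (htwo c hc)

open Classical in
noncomputable def trChild (G : SimpleGraph V) (root : V) (k : ℕ) (u : V) (b : Bool) : V :=
  if h : G.RootsTr root (k + 1) u then (if b then h.choose else h.choose_spec.choose) else u

theorem trChild_spec {k : ℕ} {u : V} (h : G.RootsTr root (k + 1) u) (b : Bool) :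
    G.IsChild root u (G.trChild root k u b) ∧ G.RootsTr root k (G.trChild root k u b) := by
  obtain ⟨h1, h2, -, h3, h4⟩ := h.choose_spec.choose_spec
  unfold trChild
  rw [dif_pos h]
  cases b
  exacts [⟨h2, h4⟩, ⟨h1, h3⟩]

theorem trChild_injective {k : ℕ} {u : V} (h : G.RootsTr root (k + 2) u) :
    Function.Injective (G.trChild root (k + 1) u) :=
  Bool.injective_iff.2 <| by
    simpa [trChild, h] using (h.choose_spec.choose_spec.2.2.1 k.succ_ne_zero).symm

noncomputable def trEmbed (G : SimpleGraph V) (root : V) (r : ℕ) : List Bool → V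
  | [] => root
  | b :: l => G.trChild root (r - l.length - 1) (G.trEmbed root r l) b

variable {r : ℕ}

theorem rootsTr_trEmbed (h : G.RootsTr root r root) : ∀ l : List Bool, l.length ≤ r →
    G.RootsTr root (r - l.length) (G.trEmbed root r l)
  | [], _ => h
  | b :: l, hl => by
    have hl : l.length + 1 ≤ r := hl
    have := rootsTr_trEmbed h l (by omega)
    rw [show r - l.length = r - l.length - 1 + 1 by omega] at this
    simpa [trEmbed, show r - (l.length + 1) = r - l.length - 1 by omega] using
      (trChild_spec this b).2

theorem isChild_trEmbed (h : G.RootsTr root r root) {l : List Bool} (hl : l.length < r)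
    (b : Bool) : G.IsChild root (G.trEmbed root r l) (G.trEmbed root r (b :: l)) := by
  have := rootsTr_trEmbed h l hl.le
  rw [show r - l.length = r - l.length - 1 + 1 by omega] at this
  exact (trChild_spec this b).1

theorem dist_trEmbed (h : G.RootsTr root r root) : ∀ l : List Bool, l.length ≤ r →
    G.dist root (G.trEmbed root r l) = l.length
  | [], _ => dist_self
  | b :: l, hl => by
    simp only [List.length_cons] at hl
    rw [(isChild_trEmbed h (by omega) b).2, dist_trEmbed h l (by omega), List.length_cons]

theorem IsTree.eq_of_trEmbed_eq (hG : G.IsTree) (h : G.RootsTr root r root) :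
    ∀ l₁ l₂ : List Bool, IsTrVert r l₁ → IsTrVert r l₂ →
      G.trEmbed root r l₁ = G.trEmbed root r l₂ → l₁ = l₂
  | [], l₂, _, h₂, he => by
    have := dist_trEmbed h l₂ h₂.1
    rw [← he, trEmbed, dist_self] at this
    exact (List.eq_nil_of_length_eq_zero this.symm).symm
  | l₁, [], h₁, _, he => by
    have := dist_trEmbed h l₁ h₁.1
    rw [he, trEmbed, dist_self] at this
    exact List.eq_nil_of_length_eq_zero this.symm
  | b₁ :: t₁, b₂ :: t₂, h₁, h₂, he => by
    have hc₁ := isChild_trEmbed h (Nat.lt_of_succ_le h₁.1) b₁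
    have hc₂ := isChild_trEmbed h (Nat.lt_of_succ_le h₂.1) b₂
    rw [he] at hc₁
    obtain rfl := hG.eq_of_trEmbed_eq h t₁ t₂ (h₁.of_suffix (List.suffix_cons _ _))
      (h₂.of_suffix (List.suffix_cons _ _)) (hG.eq_of_isChild hc₁ hc₂)
    by_cases hlast : t₁.length + 1 = r
    · have e₁ := h₁.2 hlast
      have e₂ := h₂.2 hlast
      simp only [List.head?_cons, Option.some.injEq] at e₁ e₂
      rw [e₁, e₂]
    · have hlen : t₁.length + 1 ≤ r := h₁.1
      have := rootsTr_trEmbed h t₁ (by omega)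
      rw [show r - t₁.length = r - t₁.length - 2 + 2 by omega] at this
      have hinj := trChild_injective this
      rw [show r - t₁.length - 2 + 1 = r - t₁.length - 1 by omega] at hinj
      exact congrArg (· :: t₁) (hinj he)

theorem IsTree.exists_embedding_of_rootsTr (hG : G.IsTree) (h : G.RootsTr root r root) :
    ∃ f : Tr r →g G, Function.Injective f := by
  refine ⟨⟨fun w => G.trEmbed root r w.1, ?_⟩, fun a b hab => Subtype.ext
    (hG.eq_of_trEmbed_eq h _ _ a.2 b.2 hab)⟩
  rintro ⟨a, ha⟩ ⟨b, hb⟩ (⟨c, rfl⟩ | ⟨c, rfl⟩)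
  · exact (isChild_trEmbed h (Nat.lt_of_succ_le hb.1) c).1
  · exact (isChild_trEmbed h (Nat.lt_of_succ_le ha.1) c).1.symm

end SimpleGraph

section Words

variable {α : Type*} [DecidableEq α]

def prefixTreeDist : List α → List α → ℕ
  | a :: as, b :: bs => if a = b then prefixTreeDist as bs else as.length + bs.length + 2
  | as, bs => as.length + bs.length

theorem exists_maximal_common_prefix : ∀ A B : List α, ∃ S PA PB, A = S ++ PA ∧ B = S ++ PB ∧
    prefixTreeDist A B = PA.length + PB.length ∧ ∀ Y, Y <+: A → Y <+: B → Y <+: S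
  | a :: as, b :: bs => by
    by_cases hab : a = b
    · subst hab
      obtain ⟨S, PA, PB, rfl, rfl, hd, hS⟩ := exists_maximal_common_prefix as bs
      refine ⟨a :: S, PA, PB, rfl, rfl, by simp [prefixTreeDist, hd], ?_⟩
      rintro (_ | ⟨y, Y⟩) hA hB
      · exact List.nil_prefix
      · rw [List.cons_prefix_cons] at hA hB ⊢
        exact ⟨hA.1, hS Y hA.2 hB.2⟩
    · refine ⟨[], a :: as, b :: bs, rfl, rfl, by simp [prefixTreeDist, hab]; omega, ?_⟩
      rintro (_ | ⟨y, Y⟩) hA hB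
      · exact List.nil_prefix
      · rw [List.cons_prefix_cons] at hA hB
        exact absurd (hA.1.symm.trans hB.1) hab
  | [], B => ⟨[], [], B, rfl, rfl, by simp [prefixTreeDist], fun _ hA _ => hA⟩
  | A, [] => ⟨[], A, [], rfl, rfl, by cases A <;> simp [prefixTreeDist], fun _ _ hB => hB⟩

/-- The distance in the tree of words in which the parent of `a :: l` is `l`. -/
def suffixTreeDist (a b : List α) : ℕ := prefixTreeDist a.reverse b.reverse

theorem exists_maximal_common_suffix (a b : List α) : ∃ s pa pb, a = pa ++ s ∧ b = pb ++ s ∧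
    suffixTreeDist a b = pa.length + pb.length ∧ ∀ y, y <:+ a → y <:+ b → y <:+ s := by
  obtain ⟨S, PA, PB, hA, hB, hd, hS⟩ := exists_maximal_common_prefix a.reverse b.reverse
  refine ⟨S.reverse, PA.reverse, PB.reverse, ?_, ?_, by simp [suffixTreeDist, hd], ?_⟩
  · rw [← List.reverse_append, ← hA, List.reverse_reverse]
  · rw [← List.reverse_append, ← hB, List.reverse_reverse]
  · intro y ha hb
    rw [← List.reverse_prefix] at ha hb ⊢
    simpa using hS _ ha hb

theorem eq_of_suffixTreeDist_eq_zero {a b : List α} (h : suffixTreeDist a b = 0) : a = b := by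
  obtain ⟨s, pa, pb, rfl, rfl, hd, -⟩ := exists_maximal_common_suffix a b
  rw [List.eq_nil_of_length_eq_zero (show pa.length = 0 by omega),
    List.eq_nil_of_length_eq_zero (show pb.length = 0 by omega)]

@[simp]
theorem suffixTreeDist_nil_left (b : List α) : suffixTreeDist [] b = b.length := by
  simp [suffixTreeDist, prefixTreeDist]

@[simp]
theorem suffixTreeDist_append_singleton (a b : List α) (z : α) :
    suffixTreeDist (a ++ [z]) (b ++ [z]) = suffixTreeDist a b := by
  simp [suffixTreeDist, prefixTreeDist]

theorem suffixTreeDist_append_singleton_of_ne (a b : List α) {z z' : α} (h : z ≠ z') :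
    suffixTreeDist (a ++ [z]) (b ++ [z']) = a.length + b.length + 2 := by
  simp [suffixTreeDist, prefixTreeDist, h]

end Words

theorem Tr.exists_isPath_to_suffix (r : ℕ) : ∀ (p s : List Bool) (h : IsTrVert r (p ++ s)),
    ∃ q : (Tr r).Walk ⟨p ++ s, h⟩ ⟨s, h.of_suffix (List.suffix_append p s)⟩,
      q.IsPath ∧ q.length = p.length ∧ ∀ y ∈ q.support, s <:+ y.1 ∧ y.1 <:+ p ++ s
  | [], s, h => ⟨Walk.nil, by simp⟩
  | c :: p, s, h => by
    have hp : IsTrVert r (p ++ s) := h.of_suffix (List.suffix_cons c _)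
    obtain ⟨q, hq, hlen, hsupp⟩ := Tr.exists_isPath_to_suffix r p s hp
    have hadj : (Tr r).Adj ⟨c :: p ++ s, h⟩ ⟨p ++ s, hp⟩ := Or.inr ⟨c, rfl⟩
    refine ⟨Walk.cons hadj q, hq.cons fun hmem => ?_, by simp [hlen], ?_⟩
    · simpa using (hsupp _ hmem).2.length_le
    · simp only [Walk.support_cons, List.mem_cons, forall_eq_or_imp]
      exact ⟨⟨List.suffix_append _ _, List.suffix_refl _⟩, fun y hy =>
        ⟨(hsupp y hy).1, (hsupp y hy).2.trans (List.suffix_cons c _)⟩⟩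

theorem Tr.exists_isPath_length_eq {r : ℕ} (a b : TrVert r) :
    ∃ q : (Tr r).Walk a b, q.IsPath ∧ q.length = suffixTreeDist a.1 b.1 := by
  obtain ⟨a, ha⟩ := a
  obtain ⟨b, hb⟩ := b
  obtain ⟨s, pa, pb, rfl, rfl, hd, hmax⟩ := exists_maximal_common_suffix a b
  obtain ⟨qa, hqa, hla, hsa⟩ := Tr.exists_isPath_to_suffix r pa s ha
  obtain ⟨qb, hqb, hlb, hsb⟩ := Tr.exists_isPath_to_suffix r pb s hb
  refine ⟨qa.append qb.reverse, hqa.append_of_support_inter hqb.reverse fun y hya hyb => ?_,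
    by simp [hla, hlb, hd]⟩
  rw [Walk.support_reverse, List.mem_reverse] at hyb
  have hys := hmax _ (hsa y hya).2 (hsb y hyb).2
  exact Subtype.ext (hys.eq_of_length (le_antisymm hys.length_le (hsa y hya).1.length_le))

/-- `deepWords n` is the set of the `2 ^ (n + 1)` vertices of `Tr (n + 1)` of depth at least `n`. -/
def deepWords : ℕ → Finset (List Bool)
  | 0 => {[], [false]}
  | n + 1 => (deepWords n).image (· ++ [true]) ∪ (deepWords n).image (· ++ [false])

theorem le_length_of_mem_deepWords : ∀ {n : ℕ} {w : List Bool}, w ∈ deepWords n → n ≤ w.length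
  | 0, _, _ => Nat.zero_le _
  | n + 1, _, hw => by
    simp only [deepWords, mem_union, mem_image] at hw
    rcases hw with ⟨w, hw, rfl⟩ | ⟨w, hw, rfl⟩ <;> simpa using le_length_of_mem_deepWords hw

theorem isTrVert_of_mem_deepWords : ∀ {n : ℕ} {w : List Bool}, w ∈ deepWords n →
    IsTrVert (n + 1) w
  | 0, _, hw => by
    simp only [deepWords, mem_insert, mem_singleton] at hw
    rcases hw with rfl | rfl <;> decide
  | n + 1, _, hw => by
    simp only [deepWords, mem_union, mem_image] at hw
    obtain ⟨w, hw, rfl⟩ | ⟨w, hw, rfl⟩ := hw <;>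
    · obtain ⟨hlen, hhead⟩ := isTrVert_of_mem_deepWords hw
      refine ⟨by simpa using hlen, fun h => ?_⟩
      obtain ⟨c, w, rfl⟩ := List.exists_cons_of_length_eq_add_one (by simpa using h)
      simpa using hhead (by simpa using h)

theorem card_deepWords : ∀ n : ℕ, #(deepWords n) = 2 ^ (n + 1)
  | 0 => rfl
  | n + 1 => by
    have hdisj : Disjoint ((deepWords n).image (· ++ [true]))
        ((deepWords n).image (· ++ [false])) := by
      simp [Finset.disjoint_left]
    rw [deepWords, card_union_of_disjoint hdisj,
      card_image_of_injective _ (List.append_left_injective _),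
      card_image_of_injective _ (List.append_left_injective _), card_deepWords n,
      pow_succ 2 (n + 1), mul_two]

theorem card_filter_deepWords_le : ∀ (n : ℕ) (g : List Bool) (j : ℕ),
    #{w ∈ deepWords n | suffixTreeDist g w ≤ j} ≤ 2 ^ j
  | 0, g, 0 => card_le_one.2 fun a ha b hb => by
    rw [mem_filter, Nat.le_zero] at ha hb
    exact (eq_of_suffixTreeDist_eq_zero ha.2).symm.trans (eq_of_suffixTreeDist_eq_zero hb.2)
  | 0, g, j + 1 => (card_filter_le _ _).trans (by
    rw [card_deepWords]; exact Nat.pow_le_pow_right two_pos (by omega))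
  | n + 1, g, j => by
    rcases le_or_gt (n + 2) j with hj | hj
    · exact (card_filter_le _ _).trans (card_deepWords (n + 1) ▸ Nat.pow_le_pow_right two_pos hj)
    rw [deepWords, filter_union, filter_image, filter_image]
    refine (card_union_le _ _).trans ((add_le_add card_image_le card_image_le).trans ?_)
    rcases List.eq_nil_or_concat' g with rfl | ⟨g, z, rfl⟩
    · simp only [suffixTreeDist_nil_left, List.length_append, List.length_singleton]
      cases j with
      | zero => simp
      | succ j =>
        have ih := card_filter_deepWords_le n [] j
        simp only [suffixTreeDist_nil_left] at ih
        simpa [pow_succ, mul_two] using add_le_add ih ih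
    · have side : ∀ c, #{w ∈ deepWords n | suffixTreeDist (g ++ [z]) (w ++ [c]) ≤ j} ≤
          if c = z then 2 ^ j else 0 := by
        intro c
        split_ifs with hc
        · subst hc
          simpa using card_filter_deepWords_le n g j
        · refine (card_eq_zero.2 (filter_eq_empty_iff.2 fun w hw => ?_)).le
          rw [suffixTreeDist_append_singleton_of_ne _ _ (Ne.symm hc)]
          have := le_length_of_mem_deepWords hw
          omega
      refine (add_le_add (side true) (side false)).trans ?_
      cases z <;> simp

theorem sum_two_pow_sub_lt (n : ℕ) : ∑ i : Fin (n + 1), 2 ^ (n - i) < 2 ^ (n + 1) :=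
  calc ∑ i : Fin (n + 1), 2 ^ (n - i) = ∑ j ∈ range (n + 1), 2 ^ (n + 1 - 1 - j) := by
        simp [Fin.sum_univ_eq_sum_range (fun i => 2 ^ (n - i))]
    _ = ∑ j ∈ range (n + 1), 2 ^ j := sum_range_reflect (2 ^ ·) (n + 1)
    _ < 2 ^ (n + 1) := Nat.geomSum_lt le_rfl (by simp)

theorem not_burnable_range_of_embedding {V : Type*} {T : SimpleGraph V} (hT : T.IsTree) {n : ℕ}
    (f : Tr (n + 1) →g T) (hf : Function.Injective f) :
    ¬ T.Burnable (Set.range f) (n + 1) := by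
  classical
  rintro ⟨x, hx⟩
  have : Nonempty (TrVert (n + 1)) := ⟨⟨[], by simp⟩⟩
  choose g hg using fun i => hT.exists_gate f hf (x i)
  have hcover : deepWords n ⊆
      univ.biUnion fun i : Fin (n + 1) => {w ∈ deepWords n | suffixTreeDist (g i).1 w ≤ n - i} := by
    intro w hw
    obtain ⟨i, hi⟩ := hx _ ⟨⟨w, isTrVert_of_mem_deepWords hw⟩, rfl⟩
    obtain ⟨q, hq, hlen⟩ := Tr.exists_isPath_length_eq (g i) ⟨w, isTrVert_of_mem_deepWords hw⟩
    rw [hg i _ q hq, hlen] at hi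
    exact mem_biUnion.2 ⟨i, mem_univ _, mem_filter.2 ⟨hw, by simp at hi; omega⟩⟩
  have := calc 2 ^ (n + 1) = #(deepWords n) := (card_deepWords n).symm
    _ ≤ ∑ i : Fin (n + 1), #{w ∈ deepWords n | suffixTreeDist (g i).1 w ≤ n - i} :=
        (card_le_card hcover).trans card_biUnion_le
    _ ≤ ∑ i : Fin (n + 1), 2 ^ (n - i) :=
        sum_le_sum fun i _ => card_filter_deepWords_le n _ _
  exact absurd (sum_two_pow_sub_lt n) this.not_gt

theorem not_burnable_of_embedding {V : Type*} [Nonempty V] {T : SimpleGraph V} (hT : T.IsTree)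
    {r : ℕ} (f : Tr r →g T) (hf : Function.Injective f) : ¬ T.Burnable Set.univ r := by
  cases r with
  | zero => exact fun ⟨_, hx⟩ => (hx (Classical.arbitrary V) trivial).elim fun i => i.elim0
  | succ n => exact fun h => not_burnable_range_of_embedding hT f hf (h.subset (Set.subset_univ _))

theorem burning_eq_succ_iff_contains_Tr_general {V : Type*} [Fintype V]
    (T : SimpleGraph V) (root : V) (hT : T.IsTree) (r : ℕ)
    (hdepth : ∀ v : V, T.dist root v ≤ r)
    (hbin : ∀ v : V, {u : V | T.Adj v u ∧ T.dist root u = T.dist root v + 1}.ncard ≤ 2) :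
    burningNumber T = r + 1 ↔ ∃ f : Tr r →g T, Function.Injective f := by
  have : Nonempty V := ⟨root⟩
  rw [burningNumber_eq_sInf_burnable hT.connected, Nat.sInf_upward_closed_eq_succ_iff
    (s := {k | T.Burnable Set.univ k}) fun _ _ hk h => Burnable.mono h hk root]
  have hburn : T.Burnable Set.univ (r + 1) :=
    ⟨fun _ => root, fun v _ => ⟨0, by simpa using hdepth v⟩⟩
  constructor
  · rintro ⟨-, hr⟩
    refine hT.exists_embedding_of_rootsTr (root := root) (by_contra fun hnot => hr ?_)
    simpa using hT.connected.burnable_descendants_of_not_rootsTr hbin r root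
      (by simpa using hdepth) hnot
  · rintro ⟨f, hf⟩
    exact ⟨hburn, not_burnable_of_embedding hT f hf⟩

theorem burning_eq_succ_iff_contains_Tr {V : Type*} [Fintype V]
    (T : SimpleGraph V) (root : V) (hT : T.IsTree) (r : ℕ) (hr : 1 ≤ r)
    (hdepth : ∀ v : V, T.dist root v ≤ r) (hmax : ∃ v : V, T.dist root v = r)
    (hbin : ∀ v : V, {u : V | T.Adj v u ∧ T.dist root u = T.dist root v + 1}.ncard ≤ 2) :
    burningNumber T = r + 1 ↔ ∃ f : Tr r →g T, Function.Injective f :=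
  burning_eq_succ_iff_contains_Tr_general T root hT r hdepth hbin
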